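/- arXiv:1504.07783 — 2 statements merged into one kernel-verified Lean document; each statement's English description precedes it below -/
import Mathlib

section
/- Let (c₁,d₁), (c₂,d₂) ∈ S. Then V_{c₁,d₁} = V_{c₂,d₂} if and only if (c₂,d₂) = (u·c₁, u·d₁) for some unit u of R. Moreover, if c₁d₂ = c₂d₁ and N(c₁)² ≠ N(c₂)², then V_{c₁,d₁} ∩ V_{c₂,d₂} = ∅. -/
noncomputable section

open scoped Classical
open MeasureTheory

namespace Hilbert

/-- `k₀ = 2` if `k ≡ 1 (mod 4)` and `k₀ = 1` otherwise. -/
def k0 (k : ℕ) : ℝ := if k % 4 = 1 then 2 else 1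

/-- `ω = (1 + √k)/k₀`. -/
def omg (k : ℕ) : ℝ := (1 + Real.sqrt k) / k0 k

/-- `ω' = (1 - √k)/k₀`, the algebraic conjugate of `ω`. -/
def omg' (k : ℕ) : ℝ := (1 - Real.sqrt k) / k0 k

/-- The ring `R = ℤ[ω]`, realized inside `ℝ × ℝ` via the pair of real embeddings
`α ↦ (α, α')` of `K = ℚ(√k)`. -/
def R (k : ℕ) : Subring (ℝ × ℝ) := Subring.closure {(omg k, omg' k)}

/-- The ambient space `ℝ⁴`, with coordinates `(x₁, x₂, y₁, y₂)`. -/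
abbrev Pt : Type := ℝ × ℝ × ℝ × ℝ

def x1 (p : Pt) : ℝ := p.1
def x2 (p : Pt) : ℝ := p.2.1
def y1 (p : Pt) : ℝ := p.2.2.1
def y2 (p : Pt) : ℝ := p.2.2.2

/-- `H² × H²`, identified with an open subset of `ℝ⁴`. -/
def HH : Set Pt := {p | 0 < y1 p ∧ 0 < y2 p}

/-- The coordinate `s₁`, determined by `x₁ = s₁ + s₂ ω`, `x₂ = s₁ + s₂ ω'`. -/
def s1 (k : ℕ) (p : Pt) : ℝ := (omg' k * x1 p - omg k * x2 p) / (omg' k - omg k)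

/-- The coordinate `s₂`. -/
def s2 (k : ℕ) (p : Pt) : ℝ := (x1 p - x2 p) / (omg k - omg' k)

/-- The ratio `r = y₁/y₂`. -/
def rr (p : Pt) : ℝ := y1 p / y2 p

/-- The height `h = y₁ y₂`. -/
def hh (p : Pt) : ℝ := y1 p * y2 p

/-- `‖cZ+d‖ = ((cx₁+d)² + c²y₁²)((c'x₂+d')² + c'²y₂²)`, where `c = (c, c')`, `d = (d, d')`
are given by their two real embeddings. -/
def HNorm (c d : ℝ × ℝ) (p : Pt) : ℝ :=
  ((c.1 * x1 p + d.1) ^ 2 + c.1 ^ 2 * y1 p ^ 2) *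
    ((c.2 * x2 p + d.2) ^ 2 + c.2 ^ 2 * y2 p ^ 2)

/-- `S = {(c,d) ∈ R² : cR + dR = R}`. -/
def Spairs (k : ℕ) : Set (R k × R k) := {cd | Ideal.span {cd.1, cd.2} = ⊤}

/-- `V_{c,d}^≥ = {Z ∈ H²×H² : ‖cZ+d‖ ≥ 1}`. -/
def Vge (k : ℕ) (cd : R k × R k) : Set Pt :=
  {p ∈ HH | 1 ≤ HNorm (cd.1 : ℝ × ℝ) (cd.2 : ℝ × ℝ) p}

/-- `V_{c,d}^≤ = {Z ∈ H²×H² : ‖cZ+d‖ ≤ 1}`. -/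
def Vle (k : ℕ) (cd : R k × R k) : Set Pt :=
  {p ∈ HH | HNorm (cd.1 : ℝ × ℝ) (cd.2 : ℝ × ℝ) p ≤ 1}

/-- `V_{c,d} = {Z ∈ H²×H² : ‖cZ+d‖ = 1}`. -/
def Veq (k : ℕ) (cd : R k × R k) : Set Pt :=
  {p ∈ HH | HNorm (cd.1 : ℝ × ℝ) (cd.2 : ℝ × ℝ) p = 1}

/-- `F₀ = {Z ∈ H²×H² : ‖cZ+d‖ ≥ 1 for all (c,d) ∈ S}`. -/
def F0 (k : ℕ) : Set Pt :=
  {p ∈ HH | ∀ cd ∈ Spairs k, 1 ≤ HNorm (cd.1 : ℝ × ℝ) (cd.2 : ℝ × ℝ) p}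

/-- `F_∞ = {(s₁,s₂,r,h) : |s₁| ≤ 1/2, |s₂| ≤ 1/2, ε₀⁻² ≤ r ≤ ε₀²}`, where `ε` stands
for the fundamental unit `ε₀`. -/
def FInf (k : ℕ) (ε : ℝ) : Set Pt :=
  {p ∈ HH | |s1 k p| ≤ 1 / 2 ∧ |s2 k p| ≤ 1 / 2 ∧ (ε ^ 2)⁻¹ ≤ rr p ∧ rr p ≤ ε ^ 2}

/-- `F = F_∞ ∩ F₀`. -/
def F (k : ℕ) (ε : ℝ) : Set Pt := FInf k ε ∩ F0 k

/-- `SL₂(R)`. -/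
abbrev SL (k : ℕ) := Matrix.SpecialLinearGroup (Fin 2) (R k)

/-- Möbius action on the upper half-plane: image of `x + y i` under `(a b; c d)`. -/
def moeb (a b c d x y : ℝ) : ℝ × ℝ :=
  (((a * x + b) * (c * x + d) + a * c * y ^ 2) / ((c * x + d) ^ 2 + c ^ 2 * y ^ 2),
    y / ((c * x + d) ^ 2 + c ^ 2 * y ^ 2))

/-- The action of `γ ∈ SL₂(R)` on `H²×H²`: `γ` acts on the first factor through the first
embedding and through the conjugate matrix `γ'` (second embedding) on the second factor.
This descends to the Hilbert modular group `PSL₂(R)`. -/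
def act (k : ℕ) (g : SL k) (p : Pt) : Pt :=
  ((moeb (g.1 0 0 : ℝ × ℝ).1 (g.1 0 1 : ℝ × ℝ).1 (g.1 1 0 : ℝ × ℝ).1 (g.1 1 1 : ℝ × ℝ).1
      (x1 p) (y1 p)).1,
   (moeb (g.1 0 0 : ℝ × ℝ).2 (g.1 0 1 : ℝ × ℝ).2 (g.1 1 0 : ℝ × ℝ).2 (g.1 1 1 : ℝ × ℝ).2
      (x2 p) (y2 p)).1,
   (moeb (g.1 0 0 : ℝ × ℝ).1 (g.1 0 1 : ℝ × ℝ).1 (g.1 1 0 : ℝ × ℝ).1 (g.1 1 1 : ℝ × ℝ).1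
      (x1 p) (y1 p)).2,
   (moeb (g.1 0 0 : ℝ × ℝ).2 (g.1 0 1 : ℝ × ℝ).2 (g.1 1 0 : ℝ × ℝ).2 (g.1 1 1 : ℝ × ℝ).2
      (x2 p) (y2 p)).2)

/-- The pair of real embeddings of a unit of `R`. -/
def unitVal (k : ℕ) (u : (R k)ˣ) : ℝ × ℝ := ((u : R k) : ℝ × ℝ)

/-- `e` is the fundamental unit of `R`: the smallest unit of `R` greater than `1`
(with respect to the first embedding). -/
def IsFundUnit (k : ℕ) (e : (R k)ˣ) : Prop :=
  1 < (unitVal k e).1 ∧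
    ∀ v : (R k)ˣ, 1 < (unitVal k v).1 → (unitVal k e).1 ≤ (unitVal k v).1

/-- The real number `ε₀ > 1`, the fundamental unit under the first embedding. -/
def eps (k : ℕ) (e : (R k)ˣ) : ℝ := (unitVal k e).1


/-- The norm `N(c) = c c'` of an element of `R` (as a real number). -/
def Nm (k : ℕ) (c : R k) : ℝ := ((c : ℝ × ℝ)).1 * ((c : ℝ × ℝ)).2

/-- A subset `C` of `H²×H²` is hyperbolically bounded if it is bounded in the
Euclidean metric and `y₁, y₂ > ε` on `C` for some `ε > 0`. -/
def HypBounded (C : Set Pt) : Prop :=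
  C ⊆ HH ∧ Bornology.IsBounded C ∧ ∃ ε > (0 : ℝ), ∀ p ∈ C, ε < y1 p ∧ ε < y2 p

/-- `V_{C,μ} = {(c,d) ∈ R × R : ‖cZ+d‖ ≤ μ for some Z ∈ C}`. -/
def VCmu (k : ℕ) (C : Set Pt) (μ : ℝ) : Set (R k × R k) :=
  {cd | ∃ p ∈ C, HNorm (cd.1 : ℝ × ℝ) (cd.2 : ℝ × ℝ) p ≤ μ}

/-- The conditions (8) of Theorem `FiniteSides` on a pair `(c,d) ∈ R²`. -/
def SCond (k : ℕ) (ε : ℝ) (cd : R k × R k) : Prop :=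
  cd.1 ≠ 0 ∧ Ideal.span {cd.1, cd.2} = ⊤ ∧
    |Nm k cd.1| ≤ 2 * k / (k0 k) ^ 2 ∧
    |((cd.2 : ℝ × ℝ)).1 / ((cd.1 : ℝ × ℝ)).1| <
      ε * Real.sqrt (2 * k / (Nm k cd.1 ^ 2 * (k0 k) ^ 2) - (k0 k) ^ 2 / (2 * k)) +
        (1 + omg k) / 2 ∧
    |((cd.2 : ℝ × ℝ)).2 / ((cd.1 : ℝ × ℝ)).2| <
      ε * Real.sqrt (2 * k / (Nm k cd.1 ^ 2 * (k0 k) ^ 2) - (k0 k) ^ 2 / (2 * k)) +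
        (1 - omg' k) / 2

/-- `S₁` is a set of representatives, up to multiplication by units of `R`, of the pairs
`(c,d) ∈ R²` satisfying the conditions `SCond`. -/
def IsRepSet (k : ℕ) (ε : ℝ) (S1 : Set (R k × R k)) : Prop :=
  (∀ cd ∈ S1, SCond k ε cd) ∧
    (∀ cd : R k × R k, SCond k ε cd →
      ∃ ab ∈ S1, ∃ u : (R k)ˣ, cd.1 = (u : R k) * ab.1 ∧ cd.2 = (u : R k) * ab.2) ∧
    (∀ ab ∈ S1, ∀ ab' ∈ S1,
      (∃ u : (R k)ˣ, ab'.1 = (u : R k) * ab.1 ∧ ab'.2 = (u : R k) * ab.2) → ab = ab')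

/-- The family `𝒱_∞ = {V_i^± : i = 1,2,3}`. -/
def VfamInf (k : ℕ) (ε : ℝ) : Set (Set Pt) :=
  { {p ∈ HH | s1 k p = 1 / 2}, {p ∈ HH | s1 k p = -(1 / 2)},
    {p ∈ HH | s2 k p = 1 / 2}, {p ∈ HH | s2 k p = -(1 / 2)},
    {p ∈ HH | rr p = ε ^ 2}, {p ∈ HH | rr p = (ε ^ 2)⁻¹} }

/-- The family `𝒱 = {V_{c,d} : (c,d) ∈ S, c ≠ 0}`. -/
def Vfam (k : ℕ) : Set (Set Pt) :=
  {V | ∃ cd ∈ Spairs k, cd.1 ≠ 0 ∧ V = Veq k cd}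

/-- The family `𝓜 = {γ(M) : γ ∈ Γ, M ∈ 𝒱 ∪ 𝒱_∞}`. -/
def Mfam (k : ℕ) (ε : ℝ) : Set (Set Pt) :=
  {M | ∃ g : SL k, ∃ V ∈ Vfam k ∪ VfamInf k ε, M = act k g '' V}

/-- `ω` as an element of `R`. -/
def omR (k : ℕ) : R k := ⟨(omg k, omg' k), Subring.subset_closure rfl⟩

/-- The side-pairing transformations: `γ ≠ 1` (in `PSL₂(R)`) such that `F ∩ γ⁻¹(F)` has
Hausdorff dimension `3`. -/
def SidePairings (k : ℕ) (ε : ℝ) : Set (SL k) :=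
  {g | g ≠ 1 ∧ g.1 ≠ -1 ∧ dimH (F k ε ∩ act k g⁻¹ '' F k ε) = 3}


/- If `c ≠ 0`, then `‖cZ+d‖ = N(c)² |z₁ + d/c|² |z₂ + d'/c'|²`, so `V_{c,d}` is a "sphere" of
radius `1/|N(c)|` centred at the boundary point `-d/c`, and it determines that point: above it,
`V_{c,d}` contains every point with `y₁y₂ = 1/|N(c)|`, and `‖c₂Z+d₂‖` is constant along this
curve only if `-d/c = -d₂/c₂`. If `c = 0`, then `d` is a unit and `V_{c,d}` is all of `H²×H²`.
So equal sets force `c₁d₂ = c₂d₁`, which for coprime pairs means `(c₂,d₂) = u(c₁,d₁)` with `u` a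
unit; conversely `N(u) = ±1`, so `‖ucZ+ud‖ = ‖cZ+d‖`. For the second claim, `c₁d₂ = c₂d₁` gives
`c₂(c₁z+d₁) = c₁(c₂z+d₂)` in both coordinates, hence `N(c₂)²‖c₁Z+d₁‖ = N(c₁)²‖c₂Z+d₂‖`. -/

theorem exists_unit_of_mul_eq_of_span_eq_top {A : Type*} [CommRing A] {a b c d : A}
    (hab : Ideal.span {a, b} = ⊤) (hcd : Ideal.span {c, d} = ⊤) (h : a * d = c * b) :
    ∃ u : Aˣ, c = u * a ∧ d = u * b := by
  obtain ⟨x, y, hxy⟩ := Ideal.mem_span_pair.mp ((Ideal.eq_top_iff_one _).mp hab)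
  obtain ⟨x', y', hxy'⟩ := Ideal.mem_span_pair.mp ((Ideal.eq_top_iff_one _).mp hcd)
  have hc : (x * c + y * d) * a = c := by linear_combination c * hxy + y * h
  have hd : (x * c + y * d) * b = d := by linear_combination d * hxy - x * h
  have hinv : (x * c + y * d) * (x' * a + y' * b) = 1 := by
    linear_combination x' * hc + y' * hd + hxy'
  exact ⟨⟨_, _, hinv, by rw [mul_comm, hinv]⟩, hc.symm, hd.symm⟩

theorem mul_eq_zero_of_forall_pos {a b c d K : ℝ}
    (h : ∀ v : ℝ, 0 < v → (a + b / v ^ 2) * (c + d * v ^ 2) = K) :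
    a * d = 0 ∧ b * c = 0 := by
  have h1 := h 1 one_pos
  have h2 := h 2 two_pos
  have h3 := h 3 three_pos
  norm_num at h1 h2 h3
  constructor <;> linarith

theorem HNorm_zero_left (d : ℝ × ℝ) (p : Pt) : HNorm 0 d p = (d.1 * d.2) ^ 2 := by
  simp only [HNorm, Prod.fst_zero, Prod.snd_zero]
  ring

theorem HNorm_mul_mul (u c d : ℝ × ℝ) (p : Pt) :
    HNorm (u * c) (u * d) p = (u.1 * u.2) ^ 2 * HNorm c d p := by
  simp only [HNorm, Prod.fst_mul, Prod.snd_mul]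
  ring

theorem HNorm_neg_div (c d : ℝ × ℝ) (hc₁ : c.1 ≠ 0) (hc₂ : c.2 ≠ 0) (y₁ y₂ : ℝ) :
    HNorm c d (-d.1 / c.1, -d.2 / c.2, y₁, y₂) = (c.1 * c.2 * y₁ * y₂) ^ 2 := by
  simp only [HNorm, x1, x2, y1, y2]
  field_simp
  ring

theorem sq_mul_HNorm_eq_of_mul_eq {c₁ d₁ c₂ d₂ : ℝ × ℝ} (h : c₁ * d₂ = c₂ * d₁) (p : Pt) :
    (c₂.1 * c₂.2) ^ 2 * HNorm c₁ d₁ p = (c₁.1 * c₁.2) ^ 2 * HNorm c₂ d₂ p := by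
  obtain ⟨h₁, h₂⟩ := Prod.ext_iff.mp h
  simp only [Prod.fst_mul, Prod.snd_mul] at h₁ h₂
  simp only [HNorm]
  linear_combination
    (c₁.2 ^ 2 * ((c₂.2 * x2 p + d₂.2) ^ 2 + c₂.2 ^ 2 * y2 p ^ 2) *
        (2 * c₁.1 * c₂.1 * x1 p + c₂.1 * d₁.1 + c₁.1 * d₂.1) * h₁.symm +
      c₂.1 ^ 2 * ((c₁.1 * x1 p + d₁.1) ^ 2 + c₁.1 ^ 2 * y1 p ^ 2) *
        (2 * c₁.2 * c₂.2 * x2 p + c₂.2 * d₁.2 + c₁.2 * d₂.2) * h₂.symm)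

theorem exists_HNorm_ne_one (c d : ℝ × ℝ) (hc₁ : c.1 ≠ 0) (hc₂ : c.2 ≠ 0) :
    ∃ p ∈ HH, HNorm c d p ≠ 1 := by
  by_contra! h
  have e₁ := h _ (show (-d.1 / c.1, -d.2 / c.2, 1, 1) ∈ HH from ⟨one_pos, one_pos⟩)
  have e₂ := h _ (show (-d.1 / c.1, -d.2 / c.2, 2, 2) ∈ HH from ⟨two_pos, two_pos⟩)
  rw [HNorm_neg_div c d hc₁ hc₂] at e₁ e₂
  linarith

theorem mul_eq_of_forall_HNorm_eq_one {c₁ d₁ c₂ d₂ : ℝ × ℝ} (hc₁ : c₁.1 ≠ 0 ∧ c₁.2 ≠ 0)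
    (hc₂ : c₂.1 ≠ 0 ∧ c₂.2 ≠ 0) (h : ∀ p ∈ HH, HNorm c₁ d₁ p = 1 → HNorm c₂ d₂ p = 1) :
    c₁ * d₂ = c₂ * d₁ := by
  obtain ⟨hc₁₁, hc₁₂⟩ := hc₁
  set n := |c₁.1 * c₁.2|
  have hn : 0 < n := abs_pos.mpr (mul_ne_zero hc₁₁ hc₁₂)
  have hn2 : n ^ 2 = (c₁.1 * c₁.2) ^ 2 := sq_abs _
  set e₁ := c₂.1 * (-d₁.1 / c₁.1) + d₂.1
  set e₂ := c₂.2 * (-d₁.2 / c₁.2) + d₂.2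
  have key : ∀ v : ℝ, 0 < v →
      (e₁ ^ 2 + c₂.1 ^ 2 / n ^ 2 / v ^ 2) * (e₂ ^ 2 + c₂.2 ^ 2 * v ^ 2) = 1 := by
    intro v hv
    have hp : ((-d₁.1 / c₁.1, -d₁.2 / c₁.2, 1 / (n * v), v) : Pt) ∈ HH :=
      ⟨one_div_pos.mpr (mul_pos hn hv), hv⟩
    have hV := h _ hp (by
      rw [HNorm_neg_div c₁ d₁ hc₁₁ hc₁₂]
      field_simp
      linear_combination -hn2)
    rw [← hV]
    simp only [HNorm, x1, x2, y1, y2, e₁, e₂]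
    field_simp
  obtain ⟨h₁, h₂⟩ := mul_eq_zero_of_forall_pos key
  have he₁ : e₁ = 0 := by simpa [hc₂.2] using h₁
  have he₂ : e₂ = 0 := by simpa [hc₂.1, hn.ne'] using h₂
  refine Prod.ext ?_ ?_
  · simp only [e₁, Prod.fst_mul] at he₁ ⊢
    field_simp at he₁
    linear_combination he₁
  · simp only [e₂, Prod.snd_mul] at he₂ ⊢
    field_simp at he₂
    linear_combination he₂

theorem exists_int_omg_add_omg'_and_mul (k : ℕ) :
    ∃ t n : ℤ, omg k + omg' k = t ∧ omg k * omg' k = n := by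
  have hsq : Real.sqrt k ^ 2 = k := Real.sq_sqrt (Nat.cast_nonneg k)
  by_cases h : k % 4 = 1
  · obtain ⟨m, rfl⟩ : ∃ m : ℕ, k = 4 * m + 1 := ⟨k / 4, by omega⟩
    refine ⟨1, -m, ?_, ?_⟩ <;> simp only [omg, omg', k0, if_pos h] <;> push_cast at hsq ⊢
    · ring
    · linear_combination -hsq / 4
  · refine ⟨2, 1 - k, ?_, ?_⟩ <;> simp only [omg, omg', k0, if_neg h] <;> push_cast
    · ring
    · linear_combination -hsq

theorem exists_int_eq_of_mem_R {k : ℕ} {z : ℝ × ℝ} (hz : z ∈ R k) :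
    ∃ p q : ℤ, z = (p + q * omg k, p + q * omg' k) := by
  obtain ⟨t, n, ht, hn⟩ := exists_int_omg_add_omg'_and_mul k
  induction hz using Subring.closure_induction with
  | mem x hx =>
    rw [Set.mem_singleton_iff.mp hx]
    exact ⟨0, 1, by simp⟩
  | one => exact ⟨1, 0, by ext <;> simp⟩
  | zero => exact ⟨0, 0, by ext <;> simp⟩
  | add x y _ _ hx hy =>
    obtain ⟨p, q, rfl⟩ := hx
    obtain ⟨p', q', rfl⟩ := hy
    exact ⟨p + p', q + q', by
      ext <;> simp only [Prod.fst_add, Prod.snd_add] <;> push_cast <;> ring⟩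
  | neg x _ hx =>
    obtain ⟨p, q, rfl⟩ := hx
    exact ⟨-p, -q, by ext <;> simp only [Prod.fst_neg, Prod.snd_neg] <;> push_cast <;> ring⟩
  | mul x y _ _ hx hy =>
    obtain ⟨p, q, rfl⟩ := hx
    obtain ⟨p', q', rfl⟩ := hy
    -- `ω` and `ω'` are both roots of `X² - tX + n`
    refine ⟨p * p' - q * q' * n, p * q' + q * p' + q * q' * t, ?_⟩
    simp only [Prod.mk_mul_mk, Prod.ext_iff]
    push_cast
    constructor
    · linear_combination (q * q' * omg k : ℝ) * ht - (q * q' : ℝ) * hn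
    · linear_combination (q * q' * omg' k : ℝ) * ht - (q * q' : ℝ) * hn

theorem irrational_omg_and_omg' {k : ℕ} (hk : Squarefree k) (hk1 : 1 < k) :
    Irrational (omg k) ∧ Irrational (omg' k) := by
  have hs : Irrational (Real.sqrt k) := by
    refine irrational_sqrt_natCast_iff.mpr fun ⟨m, hm⟩ => ?_
    have hm1 : IsUnit m := hk m ⟨1, by rw [hm, mul_one]⟩
    rw [Nat.isUnit_iff.mp hm1] at hm
    omega
  obtain ⟨m, hm, hk0⟩ : ∃ m : ℕ, m ≠ 0 ∧ k0 k = m := by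
    unfold k0
    split_ifs
    exacts [⟨2, two_ne_zero, by norm_num⟩, ⟨1, one_ne_zero, by norm_num⟩]
  refine ⟨?_, ?_⟩
  · simpa [omg, hk0] using (hs.natCast_add 1).div_natCast hm
  · simpa [omg', hk0] using (hs.natCast_sub 1).div_natCast hm

theorem intCast_add_intCast_mul_ne_zero {x : ℝ} (hx : Irrational x) {p q : ℤ}
    (hpq : p ≠ 0 ∨ q ≠ 0) : (p + q * x : ℝ) ≠ 0 := by
  by_cases hq : q = 0
  · simpa [hq] using hpq
  · exact ((hx.intCast_mul hq).intCast_add p).ne_zero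

theorem fst_ne_zero_and_snd_ne_zero {k : ℕ} (hk : Squarefree k) (hk1 : 1 < k) {z : R k}
    (hz : z ≠ 0) : (z : ℝ × ℝ).1 ≠ 0 ∧ (z : ℝ × ℝ).2 ≠ 0 := by
  obtain ⟨hω, hω'⟩ := irrational_omg_and_omg' hk hk1
  obtain ⟨p, q, hpq⟩ := exists_int_eq_of_mem_R z.2
  have hpq0 : p ≠ 0 ∨ q ≠ 0 := by
    by_contra! h
    exact hz (Subtype.ext (by simp [hpq, h.1, h.2]))
  rw [hpq]
  exact ⟨intCast_add_intCast_mul_ne_zero hω hpq0, intCast_add_intCast_mul_ne_zero hω' hpq0⟩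

theorem exists_int_Nm_eq (k : ℕ) (z : R k) : ∃ m : ℤ, Nm k z = m := by
  obtain ⟨t, n, ht, hn⟩ := exists_int_omg_add_omg'_and_mul k
  obtain ⟨p, q, hpq⟩ := exists_int_eq_of_mem_R z.2
  refine ⟨p ^ 2 + p * q * t + q ^ 2 * n, ?_⟩
  rw [Nm, hpq]
  push_cast
  linear_combination (p * q : ℝ) * ht + (q ^ 2 : ℝ) * hn

theorem Nm_mul (k : ℕ) (a b : R k) : Nm k (a * b) = Nm k a * Nm k b := by
  simp only [Nm, Subring.coe_mul, Prod.fst_mul, Prod.snd_mul]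
  ring

theorem Nm_unit_sq (k : ℕ) (u : (R k)ˣ) : Nm k u ^ 2 = 1 := by
  obtain ⟨m, hm⟩ := exists_int_Nm_eq k u
  obtain ⟨n, hn⟩ := exists_int_Nm_eq k ↑u⁻¹
  have hmn : Nm k u * Nm k ↑u⁻¹ = 1 := by
    rw [← Nm_mul, Units.mul_inv]
    simp [Nm]
  rw [hm, hn] at hmn
  have hmn' : m * n = 1 := by exact_mod_cast hmn
  rcases Int.eq_one_or_neg_one_of_mul_eq_one hmn' with h | h <;> simp [hm, h]

theorem Veq_eq_HH_of_fst_eq_zero {k : ℕ} {cd : R k × R k} (h : cd ∈ Spairs k)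
    (hc : cd.1 = 0) : Veq k cd = HH := by
  have hd : IsUnit cd.2 := by
    change Ideal.span {cd.1, cd.2} = ⊤ at h
    rwa [hc, Ideal.span_insert_zero, Ideal.span_singleton_eq_top] at h
  have hNm := Nm_unit_sq k hd.unit
  rw [hd.unit_spec, Nm] at hNm
  ext p
  simp [Veq, hc, HNorm_zero_left, hNm]

theorem Veq_ne_HH_of_fst_ne_zero {k : ℕ} (hk : Squarefree k) (hk1 : 1 < k)
    {cd : R k × R k} (hc : cd.1 ≠ 0) : Veq k cd ≠ HH := by
  obtain ⟨hc₁, hc₂⟩ := fst_ne_zero_and_snd_ne_zero hk hk1 hc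
  obtain ⟨p, hp, hne⟩ := exists_HNorm_ne_one _ (cd.2 : ℝ × ℝ) hc₁ hc₂
  exact fun hV => hne (hV ▸ hp).2

theorem Veq_of_eq_unit_mul {k : ℕ} {cd₁ cd₂ : R k × R k} (u : (R k)ˣ)
    (hc : cd₂.1 = u * cd₁.1) (hd : cd₂.2 = u * cd₁.2) : Veq k cd₂ = Veq k cd₁ := by
  have hu := Nm_unit_sq k u
  rw [Nm] at hu
  ext p
  simp [Veq, hc, hd, HNorm_mul_mul, hu]

theorem mul_eq_of_Veq_eq {k : ℕ} (hk : Squarefree k) (hk1 : 1 < k) {cd₁ cd₂ : R k × R k}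
    (h₁ : cd₁ ∈ Spairs k) (h₂ : cd₂ ∈ Spairs k) (hV : Veq k cd₁ = Veq k cd₂) :
    cd₁.1 * cd₂.2 = cd₂.1 * cd₁.2 := by
  by_cases hc₁ : cd₁.1 = 0 <;> by_cases hc₂ : cd₂.1 = 0
  · simp [hc₁, hc₂]
  · exact absurd (hV ▸ Veq_eq_HH_of_fst_eq_zero h₁ hc₁) (Veq_ne_HH_of_fst_ne_zero hk hk1 hc₂)
  · exact absurd (hV ▸ Veq_eq_HH_of_fst_eq_zero h₂ hc₂) (Veq_ne_HH_of_fst_ne_zero hk hk1 hc₁)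
  · refine Subtype.ext (mul_eq_of_forall_HNorm_eq_one
      (fst_ne_zero_and_snd_ne_zero hk hk1 hc₁) (fst_ne_zero_and_snd_ne_zero hk hk1 hc₂)
      fun p hp hp₁ => (hV.subset (show p ∈ Veq k cd₁ from ⟨hp, hp₁⟩)).2)

theorem Veq_inter_Veq_eq_empty {k : ℕ} {cd₁ cd₂ : R k × R k}
    (hcd : cd₁.1 * cd₂.2 = cd₂.1 * cd₁.2) (hN : Nm k cd₁.1 ^ 2 ≠ Nm k cd₂.1 ^ 2) :
    Veq k cd₁ ∩ Veq k cd₂ = ∅ := by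
  refine Set.eq_empty_iff_forall_notMem.mpr fun p ⟨⟨_, hp₁⟩, ⟨_, hp₂⟩⟩ => hN ?_
  have := sq_mul_HNorm_eq_of_mul_eq (congrArg Subtype.val hcd) p
  rw [hp₁, hp₂] at this
  simp only [Nm] at this ⊢
  linear_combination -this

/-- Let `(c₁,d₁), (c₂,d₂) ∈ S`. Then `V_{c₁,d₁} = V_{c₂,d₂}` if and only
if `(c₂,d₂) = (u c₁, u d₁)` for some unit `u` of `R`. Moreover, if `c₁d₂ = c₂d₁` and
`N(c₁)² ≠ N(c₂)²`, then `V_{c₁,d₁} ∩ V_{c₂,d₂} = ∅`. -/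
theorem Veq_eq_iff (k : ℕ) (hk : Squarefree k) (hk1 : 1 < k)
    (cd1 cd2 : R k × R k) (h1 : cd1 ∈ Spairs k) (h2 : cd2 ∈ Spairs k) :
    (Veq k cd1 = Veq k cd2 ↔
      ∃ u : (R k)ˣ, cd2.1 = (u : R k) * cd1.1 ∧ cd2.2 = (u : R k) * cd1.2) ∧
    (cd1.1 * cd2.2 = cd2.1 * cd1.2 → Nm k cd1.1 ^ 2 ≠ Nm k cd2.1 ^ 2 →
      Veq k cd1 ∩ Veq k cd2 = ∅) := by
  refine ⟨⟨fun hV => ?_, fun ⟨u, hc, hd⟩ => (Veq_of_eq_unit_mul u hc hd).symm⟩,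
    Veq_inter_Veq_eq_empty⟩
  exact exists_unit_of_mul_eq_of_span_eq_top h1 h2 (mul_eq_of_Veq_eq hk hk1 h1 h2 hV)

end Hilbert
end
end

section
/- If γ = (a b; c d) ∈ Γ with c ≠ 0, then F ⊆ V_{c,d}^≥ and γ⁻¹(F) ⊆ V_{c,d}^≤; consequently F ∩ γ⁻¹(F) ⊆ V_{c,d}. -/
noncomputable section

open scoped Classical
open MeasureTheory

namespace Hilbert

/-! The bottom row `(c, d)` of `γ ∈ SL₂(R)` is coprime, so `‖cZ + d‖ ≥ 1` on `F₀` by definition.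
The cocycle relation of the automorphy factor `cz + d` gives `‖c γ⁻¹Z + d‖ = ‖-cZ + a‖⁻¹`, and
`(-c, a)` is the (coprime) bottom row of `γ⁻¹`, so on `γ⁻¹(F₀)` the norm is at most `1`. -/

/-- `|cz + d|²` for `z = x + y i`. -/
def normSqDenom (c d x y : ℝ) : ℝ := (c * x + d) ^ 2 + c ^ 2 * y ^ 2

lemma HNorm_eq (c d : ℝ × ℝ) (p : Pt) :
    HNorm c d p = normSqDenom c.1 d.1 (x1 p) (y1 p) * normSqDenom c.2 d.2 (x2 p) (y2 p) :=
  rfl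

lemma normSqDenom_pos {c d x y : ℝ} (hcd : c ≠ 0 ∨ d ≠ 0) (hy : 0 < y) :
    0 < normSqDenom c d x y := by
  rcases eq_or_ne c 0 with rfl | hc
  · simpa [normSqDenom, sq_pos_iff] using hcd
  · exact add_pos_of_nonneg_of_pos (sq_nonneg _) (by positivity)

lemma moeb_fst (a b c d x y : ℝ) :
    (moeb a b c d x y).1 = ((a * x + b) * (c * x + d) + a * c * y ^ 2) / normSqDenom c d x y :=
  rfl

lemma moeb_snd (a b c d x y : ℝ) : (moeb a b c d x y).2 = y / normSqDenom c d x y :=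
  rfl

/-- The cocycle relation `j(γ, γ⁻¹z) j(γ⁻¹, z) = j(1, z) = 1` for `j(γ, z) = cz + d`, in squared
absolute value. -/
lemma normSqDenom_moeb_inv {a b c d x y : ℝ} (h : a * d - b * c = 1)
    (hD : normSqDenom (-c) a x y ≠ 0) :
    normSqDenom c d (moeb d (-b) (-c) a x y).1 (moeb d (-b) (-c) a x y).2
      = (normSqDenom (-c) a x y)⁻¹ := by
  set D := normSqDenom (-c) a x y with hD_def
  have hx : c * (moeb d (-b) (-c) a x y).1 + d = (a - c * x) / D := by
    rw [moeb_fst, ← hD_def, mul_div_assoc', div_add' _ _ _ hD, div_left_inj' hD, hD_def,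
      normSqDenom]
    linear_combination (a - c * x) * h
  have hnum : (a - c * x) ^ 2 + c ^ 2 * y ^ 2 = D := by
    rw [hD_def, normSqDenom]
    ring
  rw [normSqDenom, hx, moeb_snd, ← hD_def, div_pow, div_pow, mul_div_assoc', ← add_div, hnum,
    sq, div_mul_cancel_left₀ hD]

lemma ne_zero_or_ne_zero_of_det_eq_one {a b c d : ℝ} (h : a * d - b * c = 1) : c ≠ 0 ∨ d ≠ 0 := by
  by_contra! hcd
  simp [hcd.1, hcd.2] at h

section SL

variable {k : ℕ}

lemma det_embeddings (g : SL k) :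
    (g.1 0 0 : ℝ × ℝ).1 * (g.1 1 1 : ℝ × ℝ).1 - (g.1 0 1 : ℝ × ℝ).1 * (g.1 1 0 : ℝ × ℝ).1 = 1 ∧
      (g.1 0 0 : ℝ × ℝ).2 * (g.1 1 1 : ℝ × ℝ).2 - (g.1 0 1 : ℝ × ℝ).2 * (g.1 1 0 : ℝ × ℝ).2 = 1 := by
  have hdet := g.2
  rw [Matrix.det_fin_two] at hdet
  have h : (g.1 0 0 : ℝ × ℝ) * g.1 1 1 - (g.1 0 1 : ℝ × ℝ) * g.1 1 0 = 1 := by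
    exact_mod_cast hdet
  exact ⟨by simpa using congrArg Prod.fst h, by simpa using congrArg Prod.snd h⟩

lemma bottomRow_mem_Spairs (g : SL k) : (g.1 1 0, g.1 1 1) ∈ Spairs k := by
  rw [Spairs, Set.mem_ofPred_eq, Ideal.span_insert, Ideal.sup_eq_top_iff_isCoprime]
  exact g.isCoprime_row 1

lemma normSqDenom_bottomRow_pos (g : SL k) {p : Pt} (hp : p ∈ HH) :
    0 < normSqDenom (g.1 1 0 : ℝ × ℝ).1 (g.1 1 1 : ℝ × ℝ).1 (x1 p) (y1 p) ∧
      0 < normSqDenom (g.1 1 0 : ℝ × ℝ).2 (g.1 1 1 : ℝ × ℝ).2 (x2 p) (y2 p) := by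
  obtain ⟨hdet1, hdet2⟩ := det_embeddings g
  exact ⟨normSqDenom_pos (ne_zero_or_ne_zero_of_det_eq_one hdet1) hp.1,
    normSqDenom_pos (ne_zero_or_ne_zero_of_det_eq_one hdet2) hp.2⟩

lemma act_mem_HH (g : SL k) {p : Pt} (hp : p ∈ HH) : act k g p ∈ HH :=
  ⟨div_pos hp.1 (normSqDenom_bottomRow_pos g hp).1, div_pos hp.2 (normSqDenom_bottomRow_pos g hp).2⟩

lemma HNorm_act_inv (g : SL k) {p : Pt} (hp : p ∈ HH) :
    HNorm (g.1 1 0) (g.1 1 1) (act k g⁻¹ p) = (HNorm ((g⁻¹).1 1 0) ((g⁻¹).1 1 1) p)⁻¹ := by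
  have hD := normSqDenom_bottomRow_pos g⁻¹ hp
  obtain ⟨hdet1, hdet2⟩ := det_embeddings g
  simp only [Matrix.SpecialLinearGroup.SL2_inv_expl, act, HNorm_eq, x1, x2, y1, y2,
    Matrix.cons_val_one, Matrix.cons_val_zero, Subring.coe_neg, Prod.fst_neg,
    Prod.snd_neg] at hD ⊢
  rw [normSqDenom_moeb_inv hdet1 hD.1.ne', normSqDenom_moeb_inv hdet2 hD.2.ne', mul_inv]

lemma F0_subset_Vge {cd : R k × R k} (hcd : cd ∈ Spairs k) : F0 k ⊆ Vge k cd :=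
  fun _ hp ↦ ⟨hp.1, hp.2 cd hcd⟩

lemma act_inv_image_F0_subset_Vle (g : SL k) : act k g⁻¹ '' F0 k ⊆ Vle k (g.1 1 0, g.1 1 1) := by
  rintro _ ⟨q, ⟨hq, hq0⟩, rfl⟩
  refine ⟨act_mem_HH g⁻¹ hq, ?_⟩
  show HNorm (g.1 1 0) (g.1 1 1) (act k g⁻¹ q) ≤ 1
  rw [HNorm_act_inv g hq]
  exact inv_le_one_of_one_le₀ (hq0 (_, _) (bottomRow_mem_Spairs g⁻¹))

lemma Vge_inter_Vle (cd : R k × R k) : Vge k cd ∩ Vle k cd = Veq k cd := by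
  ext p
  simp only [Vge, Vle, Veq, Set.mem_inter_iff, Set.mem_ofPred_eq, le_antisymm_iff]
  tauto

end SL

theorem F_subset_Vge_general (k : ℕ) (e : (R k)ˣ) (g : SL k) :
    F k (eps k e) ⊆ Vge k (g.1 1 0, g.1 1 1) ∧
    act k g⁻¹ '' F k (eps k e) ⊆ Vle k (g.1 1 0, g.1 1 1) ∧
    F k (eps k e) ∩ act k g⁻¹ '' F k (eps k e) ⊆ Veq k (g.1 1 0, g.1 1 1) := by
  have hge : F k (eps k e) ⊆ Vge k (g.1 1 0, g.1 1 1) :=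
    Set.inter_subset_right.trans (F0_subset_Vge (bottomRow_mem_Spairs g))
  have hle : act k g⁻¹ '' F k (eps k e) ⊆ Vle k (g.1 1 0, g.1 1 1) :=
    (Set.image_mono Set.inter_subset_right).trans (act_inv_image_F0_subset_Vle g)
  exact ⟨hge, hle, (Set.inter_subset_inter hge hle).trans (Vge_inter_Vle _).le⟩

/-- If `γ = (a b; c d) ∈ Γ` with `c ≠ 0`, then `F ⊆ V_{c,d}^≥` and
`γ⁻¹(F) ⊆ V_{c,d}^≤`; consequently `F ∩ γ⁻¹(F) ⊆ V_{c,d}`. -/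
theorem F_subset_Vge (k : ℕ) (hk : Squarefree k) (hk1 : 1 < k)
    (e : (R k)ˣ) (he : IsFundUnit k e)
    (g : SL k) (hg : g.1 1 0 ≠ 0) :
    F k (eps k e) ⊆ Vge k (g.1 1 0, g.1 1 1) ∧
    act k g⁻¹ '' F k (eps k e) ⊆ Vle k (g.1 1 0, g.1 1 1) ∧
    F k (eps k e) ∩ act k g⁻¹ '' F k (eps k e) ⊆ Veq k (g.1 1 0, g.1 1 1) :=
  F_subset_Vge_general k e g

end Hilbert
end
end
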